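/- Let w be a nonzero vector in R^n, μ a vector with wᵀμ > c, and Σ a positive definite n×n matrix. Then the infimum of (x−μ)ᵀΣ⁻¹(x−μ) over the halfspace {x : wᵀx ≤ c} equals (wᵀμ − c)²/(wᵀΣw). -/

import Mathlib

open Matrix

private lemma posdef_dot {n : ℕ} {A : Matrix (Fin n) (Fin n) ℝ} (hA : A.PosDef)
    {x : Fin n → ℝ} (hx : x ≠ 0) : 0 < x ⬝ᵥ (A *ᵥ x) := by
  have := hA.re_dotProduct_pos hx
  simpa using this

private lemma posdef_dot_nonneg {n : ℕ} {A : Matrix (Fin n) (Fin n) ℝ} (hA : A.PosDef)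
    (x : Fin n → ℝ) : 0 ≤ x ⬝ᵥ (A *ᵥ x) := by
  rcases eq_or_ne x 0 with rfl | hx
  · simp
  · exact (posdef_dot hA hx).le

/-- Cauchy–Schwarz for a positive definite symmetric matrix. -/
private lemma posdef_cs {n : ℕ} {A : Matrix (Fin n) (Fin n) ℝ} (hA : A.PosDef)
    (hsym : Aᵀ = A) (u v : Fin n → ℝ) :
    (u ⬝ᵥ (A *ᵥ v)) ^ 2 ≤ (u ⬝ᵥ (A *ᵥ u)) * (v ⬝ᵥ (A *ᵥ v)) := by
  rcases eq_or_ne v 0 with rfl | hv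
  · simp
  have hvv : 0 < v ⬝ᵥ (A *ᵥ v) := posdef_dot hA hv
  set s : ℝ := (u ⬝ᵥ (A *ᵥ v)) / (v ⬝ᵥ (A *ᵥ v)) with hs
  have h0 : 0 ≤ (u - s • v) ⬝ᵥ (A *ᵥ (u - s • v)) := posdef_dot_nonneg hA _
  have hvu : v ⬝ᵥ (A *ᵥ u) = u ⬝ᵥ (A *ᵥ v) := by
    rw [dotProduct_mulVec, ← hsym, vecMul_transpose, dotProduct_comm, hsym]
  have hexp : (u - s • v) ⬝ᵥ (A *ᵥ (u - s • v))
      = u ⬝ᵥ (A *ᵥ u) - 2 * s * (u ⬝ᵥ (A *ᵥ v)) + s ^ 2 * (v ⬝ᵥ (A *ᵥ v)) := by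
    simp only [mulVec_sub, dotProduct_sub, sub_dotProduct, mulVec_smul, dotProduct_smul,
      smul_dotProduct, smul_eq_mul, hvu]
    ring
  rw [hexp] at h0
  have hss : s * (v ⬝ᵥ (A *ᵥ v)) = u ⬝ᵥ (A *ᵥ v) := div_mul_cancel₀ _ hvv.ne'
  nlinarith [sq_nonneg s, hvv]

theorem stmt_0 {n : ℕ} (w μ : Fin n → ℝ) (c : ℝ) (S : Matrix (Fin n) (Fin n) ℝ)
    (hw : w ≠ 0) (hμ : w ⬝ᵥ μ > c) (hS : S.PosDef) :
    sInf {q : ℝ | ∃ x : Fin n → ℝ, w ⬝ᵥ x ≤ c ∧ q = (x - μ) ⬝ᵥ (S⁻¹ *ᵥ (x - μ))}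
      = (w ⬝ᵥ μ - c) ^ 2 / (w ⬝ᵥ (S *ᵥ w)) := by
  have hA : (S⁻¹).PosDef := hS.inv
  have hSsym : Sᵀ = S := by simpa using hS.isHermitian.eq
  have hAsym : (S⁻¹)ᵀ = S⁻¹ := by simpa using hA.isHermitian.eq
  have hdet : IsUnit S.det := isUnit_iff_ne_zero.mpr hS.det_pos.ne'
  have hinv_mul : S⁻¹ * S = 1 := nonsing_inv_mul S hdet
  have hmul_inv : S * S⁻¹ = 1 := mul_nonsing_inv S hdet
  have hASw : S⁻¹ *ᵥ (S *ᵥ w) = w := by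
    rw [mulVec_mulVec, hinv_mul, one_mulVec]
  have ha : 0 < w ⬝ᵥ (S *ᵥ w) := posdef_dot hS hw
  set a : ℝ := w ⬝ᵥ (S *ᵥ w) with ha_def
  set v : ℝ := (w ⬝ᵥ μ - c) ^ 2 / a with hv_def
  set t : ℝ := (w ⬝ᵥ μ - c) / a with ht_def
  -- membership: v is attained
  have hmem : v ∈ {q : ℝ | ∃ x : Fin n → ℝ, w ⬝ᵥ x ≤ c ∧ q = (x - μ) ⬝ᵥ (S⁻¹ *ᵥ (x - μ))} := by
    refine ⟨μ - t • (S *ᵥ w), ?_, ?_⟩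
    · have : w ⬝ᵥ (μ - t • (S *ᵥ w)) = w ⬝ᵥ μ - t * a := by
        simp [dotProduct_sub, dotProduct_smul, ha_def, mul_comm]
      rw [this, ht_def, div_mul_cancel₀ _ ha.ne']
      linarith
    · have hx : (μ - t • (S *ᵥ w)) - μ = (-t) • (S *ᵥ w) := by
        ext i; simp [neg_smul]
      rw [hx]
      rw [mulVec_smul, hASw, dotProduct_smul, smul_dotProduct]
      have hsw : (S *ᵥ w) ⬝ᵥ w = a := by rw [dotProduct_comm]
      rw [smul_eq_mul, smul_eq_mul, hsw, hv_def, ht_def]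
      field_simp
  have hne : {q : ℝ | ∃ x : Fin n → ℝ, w ⬝ᵥ x ≤ c ∧ q = (x - μ) ⬝ᵥ (S⁻¹ *ᵥ (x - μ))}.Nonempty :=
    ⟨v, hmem⟩
  -- lower bound
  have hlb : ∀ q ∈ {q : ℝ | ∃ x : Fin n → ℝ, w ⬝ᵥ x ≤ c ∧ q = (x - μ) ⬝ᵥ (S⁻¹ *ᵥ (x - μ))},
      v ≤ q := by
    rintro q ⟨x, hx, rfl⟩
    set u : Fin n → ℝ := x - μ with hu
    have hwu : w ⬝ᵥ u ≤ c - w ⬝ᵥ μ := by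
      simp only [hu, dotProduct_sub]; linarith
    have hcs := posdef_cs hA hAsym (S *ᵥ w) u
    have h1 : (S *ᵥ w) ⬝ᵥ (S⁻¹ *ᵥ u) = w ⬝ᵥ u := by
      rw [dotProduct_mulVec, ← hAsym, vecMul_transpose, hASw]
      
    have h2 : (S *ᵥ w) ⬝ᵥ (S⁻¹ *ᵥ (S *ᵥ w)) = a := by
      rw [hASw, dotProduct_comm]
    rw [h1, h2] at hcs
    have hsq : (w ⬝ᵥ μ - c) ^ 2 ≤ (w ⬝ᵥ u) ^ 2 := by nlinarith
    have hq : 0 ≤ u ⬝ᵥ (S⁻¹ *ᵥ u) := posdef_dot_nonneg hA u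
    rw [hv_def, div_le_iff₀ ha]
    nlinarith
  exact le_antisymm (csInf_le ⟨v, hlb⟩ hmem) (le_csInf hne hlb)
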